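/- Let F be a countable field. Then the set of principal prime ideals (t − σ)F[[z,t]], as σ ranges over zF[[z]], is an uncountable family of pairwise distinct prime ideals of F[[z,t]], provided F is infinite; more generally, for any field F the set zF[[z]] is uncountable and σ ↦ (t − σ)F[[z,t]] is injective with each (t − σ) prime. -/

import Mathlib

/-!
Over a ring `A` that is complete for an ideal `I`, Weierstrass division by the distinguished
polynomial `t - a` (with `a ∈ I`) identifies `A⟦t⟧ ⧸ (t - a)` with `A[t] ⧸ (t - a) ≅ A`,
the isomorphism sending `f` to the remainder `f(a)`. Taking `A = F⟦z⟧` and `I = (z)`, the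
quotient is the domain `F⟦z⟧`, so `(t - σ)` is prime, and `C r ∈ (t - σ)` only for `r = 0`,
which separates the ideals. Uncountability: `g ↦ z·g` embeds `ℕ → F` into `zF⟦z⟧`.
-/

open Cardinal PowerSeries

theorem not_countable_nat_arrow (α : Type*) [Nontrivial α] : ¬ Countable (ℕ → α) := by
  rw [← mk_le_aleph0_iff, not_le, mk_arrow, mk_nat, lift_aleph0, lift_uzero]
  calc ℵ₀ < 2 ^ ℵ₀ := cantor _
    _ ≤ #α ^ ℵ₀ := power_le_power_right (two_le_iff.mpr (exists_pair_ne α))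

theorem Polynomial.isDistinguishedAt_X_sub_C {R : Type*} [CommRing R] {I : Ideal R} {a : R}
    (ha : a ∈ I) : (X - C a).IsDistinguishedAt I where
  mem {n} hn := by
    obtain rfl : n = 0 := by have := natDegree_X_sub_C_le (R := R) a; omega
    simpa using I.neg_mem ha
  monic := monic_X_sub_C a

namespace PowerSeries

theorem not_countable_constantCoeff_eq_zero (R : Type*) [Semiring R] [Nontrivial R] :
    ¬ Countable {σ : R⟦X⟧ // constantCoeff σ = 0} := fun _ ↦
  not_countable_nat_arrow R <| Function.Injective.countable
    (f := fun g : ℕ → R ↦ (⟨X * mk g, by simp⟩ : {σ : R⟦X⟧ // constantCoeff σ = 0}))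
    fun g h hgh ↦ funext fun n ↦ by simpa using congrArg (coeff (n + 1) ·.1) hgh

theorem mem_span_X_iff_constantCoeff_eq_zero {R : Type*} [CommSemiring R] {σ : R⟦X⟧} :
    σ ∈ Ideal.span {X} ↔ constantCoeff σ = 0 :=
  Ideal.mem_span_singleton.trans X_dvd_iff

section QuotientSpanXSubC

variable {A : Type*} [CommRing A] {I : Ideal A} [IsAdicComplete I A] {a : A}

noncomputable def quotientSpanXSubCAlgEquiv (ha : a ∈ I) :
    (A⟦X⟧ ⧸ Ideal.span {X - C a}) ≃ₐ[A] A :=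
  (Ideal.quotientEquivAlgOfEq A (by simp)).trans <|
    (Polynomial.isDistinguishedAt_X_sub_C ha).algEquivQuotient.symm.trans
      (Polynomial.quotientSpanXSubCAlgEquiv a)

theorem C_mem_span_X_sub_C_iff (ha : a ∈ I) {r : A} : C r ∈ Ideal.span {X - C a} ↔ r = 0 := by
  rw [← Ideal.Quotient.eq_zero_iff_mem, ← (quotientSpanXSubCAlgEquiv ha).injective.eq_iff,
    map_zero]
  exact iff_of_eq (congrArg (· = 0) ((quotientSpanXSubCAlgEquiv ha).commutes r))

theorem eq_of_span_X_sub_C_eq (ha : a ∈ I) {b : A}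
    (h : Ideal.span {X - C a} = Ideal.span {(X - C b : A⟦X⟧)}) : a = b := by
  have hba : C (b - a) ∈ Ideal.span {X - C a} := by
    have hb : X - C b ∈ Ideal.span {X - C a} := h ▸ Ideal.mem_span_singleton_self _
    simpa using Ideal.sub_mem _ (Ideal.mem_span_singleton_self _) hb
  exact (sub_eq_zero.mp ((C_mem_span_X_sub_C_iff ha).mp hba)).symm

theorem isPrime_span_X_sub_C [IsDomain A] (ha : a ∈ I) : (Ideal.span {X - C a}).IsPrime :=
  (Ideal.Quotient.isDomain_iff_prime _).mp
    ((quotientSpanXSubCAlgEquiv ha).toMulEquiv.isDomain A)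

end QuotientSpanXSubC

end PowerSeries

/-- In `F[[z,t]] = (F[[z]])[[t]]` over a field `F`:  the set `zF[[z]]` of power series with
zero constant term is uncountable, the assignment `σ ↦ (t - σ)F[[z,t]]` is injective on it,
and each ideal `(t - σ)` is prime. -/
theorem stmt7 (F : Type*) [Field F] :
    ¬ Countable {σ : PowerSeries F // PowerSeries.constantCoeff (R := F) σ = 0} ∧
    Function.Injective (fun σ : {σ : PowerSeries F // PowerSeries.constantCoeff (R := F) σ = 0} =>
      Ideal.span {(PowerSeries.X - PowerSeries.C (R := PowerSeries F) σ.1 :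
        PowerSeries (PowerSeries F))}) ∧
    ∀ σ : PowerSeries F, PowerSeries.constantCoeff (R := F) σ = 0 →
      (Ideal.span {(PowerSeries.X - PowerSeries.C (R := PowerSeries F) σ :
        PowerSeries (PowerSeries F))}).IsPrime :=
  ⟨not_countable_constantCoeff_eq_zero F,
    fun σ _ h ↦ Subtype.ext <|
      eq_of_span_X_sub_C_eq (mem_span_X_iff_constantCoeff_eq_zero.mpr σ.2) h,
    fun _ hσ ↦ isPrime_span_X_sub_C (mem_span_X_iff_constantCoeff_eq_zero.mpr hσ)⟩
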